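/- Let T be a finite directed graph, H a finitely generated abelian group, and t an additive H-valued function on directed paths of T. Define the normalized translation t_n(γ) = (1/length γ)·t(γ) ∈ H ⊗ R for each cycle γ. Then the set {t_n(γ) : γ a cycle in T} is contained in the convex hull of {t_n(γ) : γ a simple cycle in T}; in particular, since there are finitely many simple cycles, this convex hull is a compact convex polytope. -/

import Mathlib

open scoped TensorProduct

/-- The set of normalized translations `t_n(γ) = (1/length γ) • t(γ) ∈ H ⊗ ℝ` of all cycles
in a finite directed graph. Cycles of length `k+1` are encoded as `c : Fin (k+1) → E`. -/
def cycleValues {V E H : Type*} [Fintype V] [Fintype E] [AddCommGroup H]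
    (src tgt : E → V) (t : E → H) : Set (ℝ ⊗[ℤ] H) :=
  {x | ∃ (k : ℕ) (c : Fin (k + 1) → E),
    (∀ i, tgt (c i) = src (c (i + 1))) ∧
    x = ((k + 1 : ℝ))⁻¹ • ∑ i, (1 : ℝ) ⊗ₜ[ℤ] t (c i)}

/-- As `cycleValues` but restricted to simple cycles (no repeated vertex). -/
def simpleCycleValues {V E H : Type*} [Fintype V] [Fintype E] [AddCommGroup H]
    (src tgt : E → V) (t : E → H) : Set (ℝ ⊗[ℤ] H) :=
  {x | ∃ (k : ℕ) (c : Fin (k + 1) → E),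
    (∀ i, tgt (c i) = src (c (i + 1))) ∧ Function.Injective (src ∘ c) ∧
    x = ((k + 1 : ℝ))⁻¹ • ∑ i, (1 : ℝ) ⊗ₜ[ℤ] t (c i)}

/-!
A closed walk that repeats a vertex, rotated to start there, is the concatenation of two shorter
closed walks, and its mean edge weight is the length-weighted average of their mean weights.
Strong induction on the length puts the mean of every closed walk into the convex hull of the
means of the simple cycles. A simple cycle visits each vertex at most once, so it has length at
most `|V|`, and there are finitely many.
-/

section ClosedWalk

variable {V E M : Type*} [AddCommGroup M] [Module ℝ M] (src tgt : E → V) (f : E → M)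

def IsClosedWalk {n : ℕ} (c : Fin n → E) : Prop :=
  ∀ i, tgt (c i) = src (c (finRotate n i))

noncomputable def walkMean {n : ℕ} (c : Fin n → E) : M :=
  (n : ℝ)⁻¹ • ∑ i, f (c i)

def simpleCycleMeans : Set M :=
  {x | ∃ (n : ℕ) (c : Fin n → E),
    0 < n ∧ IsClosedWalk src tgt c ∧ Function.Injective (src ∘ c) ∧ walkMean f c = x}

variable {src tgt f}

lemma isClosedWalk_succ_iff {k : ℕ} (c : Fin (k + 1) → E) :
    IsClosedWalk src tgt c ↔ ∀ i, tgt (c i) = src (c (i + 1)) := by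
  simp [IsClosedWalk]

lemma walkMean_succ {k : ℕ} (c : Fin (k + 1) → E) :
    walkMean f c = ((k : ℝ) + 1)⁻¹ • ∑ i, f (c i) := by
  simp [walkMean]

lemma IsClosedWalk.comp_equiv {m n : ℕ} {c : Fin n → E} (hc : IsClosedWalk src tgt c)
    {e : Fin m ≃ Fin n} (he : ∀ i, e (finRotate m i) = finRotate n (e i)) :
    IsClosedWalk src tgt (c ∘ e) := fun i => by
  simp only [Function.comp_apply, he, hc (e i)]

lemma walkMean_comp_equiv {m n : ℕ} (c : Fin n → E) (e : Fin m ≃ Fin n) :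
    walkMean f (c ∘ e) = walkMean f c := by
  obtain rfl := Fin.equiv_iff_eq.mp ⟨e⟩
  simp only [walkMean, Function.comp_apply, e.sum_comp (fun i => f (c i))]

lemma val_finRotate {n : ℕ} (i : Fin n) :
    (finRotate n i : ℕ) = if (i : ℕ) + 1 = n then 0 else (i : ℕ) + 1 := by
  cases n with
  | zero => exact i.elim0
  | succ n =>
    rw [coe_finRotate]
    simp only [Fin.ext_iff, Fin.val_last, Nat.add_right_cancel_iff]

lemma finCycle_finRotate {n : ℕ} (k i : Fin n) :
    finCycle k (finRotate n i) = finRotate n (finCycle k i) := by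
  have := k.neZero
  simp [add_right_comm]

lemma finCongr_finRotate {m n : ℕ} (h : m = n) (i : Fin m) :
    finCongr h (finRotate m i) = finRotate n (finCongr h i) := by
  subst h
  rfl

lemma IsClosedWalk.comp_castAdd {a b : ℕ} {c : Fin (a + 1 + (b + 1)) → E}
    (hc : IsClosedWalk src tgt c)
    (hret : src (c (Fin.castAdd (b + 1) 0)) = src (c (Fin.natAdd (a + 1) 0))) :
    IsClosedWalk src tgt (c ∘ Fin.castAdd (b + 1)) := by
  intro i
  rw [Function.comp_apply, hc, Function.comp_apply]
  by_cases hi : (i : ℕ) = a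
  · have h₁ : finRotate _ (Fin.castAdd (b + 1) i) = Fin.natAdd (a + 1) 0 := by
      ext; rw [val_finRotate]; simp [hi]
    have h₂ : finRotate (a + 1) i = 0 := by
      ext; rw [val_finRotate]; simp [hi]
    rw [h₁, h₂, hret]
  · congr 2
    ext
    simp only [val_finRotate, Fin.val_castAdd]
    split_ifs <;> omega

lemma IsClosedWalk.comp_natAdd {a b : ℕ} {c : Fin (a + 1 + (b + 1)) → E}
    (hc : IsClosedWalk src tgt c)
    (hret : src (c (Fin.castAdd (b + 1) 0)) = src (c (Fin.natAdd (a + 1) 0))) :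
    IsClosedWalk src tgt (c ∘ Fin.natAdd (a + 1)) := by
  intro i
  rw [Function.comp_apply, hc, Function.comp_apply]
  by_cases hi : (i : ℕ) = b
  · have h₁ : finRotate _ (Fin.natAdd (a + 1) i) = Fin.castAdd (b + 1) 0 := by
      ext; rw [val_finRotate]; simp [hi]; omega
    have h₂ : finRotate (b + 1) i = 0 := by
      ext; rw [val_finRotate]; simp [hi]
    rw [h₁, h₂, hret]
  · congr 2
    ext
    simp only [val_finRotate, Fin.val_natAdd]
    split_ifs <;> omega

lemma walkMean_eq_add {a b : ℕ} (c : Fin (a + 1 + (b + 1)) → E) :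
    walkMean f c = ((a + 1 : ℝ) / (a + b + 2)) • walkMean f (c ∘ Fin.castAdd (b + 1)) +
      ((b + 1 : ℝ) / (a + b + 2)) • walkMean f (c ∘ Fin.natAdd (a + 1)) := by
  simp only [walkMean, Function.comp_apply]
  rw [Fin.sum_univ_add, smul_add, smul_smul, smul_smul]
  congr 2 <;> push_cast <;> field_simp <;> ring

/-- `e` is a rotation of `Fin n` carrying the starts of the two halves to `i` and `j`. -/
lemma exists_finRotate_equiv_split {n : ℕ} {i j : Fin n} (hij : i ≠ j) :
    ∃ (a b : ℕ) (e : Fin (a + 1 + (b + 1)) ≃ Fin n),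
      (∀ x, e (finRotate _ x) = finRotate n (e x)) ∧
      e (Fin.castAdd (b + 1) 0) = i ∧ e (Fin.natAdd (a + 1) 0) = j := by
  have := i.neZero
  have hd : ((j - i : Fin n) : ℕ) ≠ 0 := Fin.val_ne_zero_iff.mpr (sub_ne_zero.mpr hij.symm)
  have hlen : ((j - i : Fin n) : ℕ) - 1 + 1 + (n - (j - i : Fin n) - 1 + 1) = n := by omega
  refine ⟨_, _, (finCongr hlen).trans (finCycle i), fun x => ?_, ?_, ?_⟩
  · simp only [Equiv.trans_apply, finCongr_finRotate, finCycle_finRotate]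
  · have h₀ : finCongr hlen (Fin.castAdd _ 0) = 0 := Fin.ext (by simp)
    simp [h₀]
  · have hd : finCongr hlen (Fin.natAdd _ 0) = j - i := Fin.ext (by simp; omega)
    simp [hd]

theorem walkMean_mem_convexHull {n : ℕ} {c : Fin n → E} (hn : 0 < n)
    (hc : IsClosedWalk src tgt c) :
    walkMean f c ∈ convexHull ℝ (simpleCycleMeans src tgt f) := by
  induction n using Nat.strong_induction_on with
  | _ n ih =>
  by_cases hinj : Function.Injective (src ∘ c)
  · exact subset_convexHull ℝ _ ⟨n, c, hn, hc, hinj, rfl⟩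
  obtain ⟨i, j, hsrc, hij⟩ := Function.not_injective_iff.mp hinj
  obtain ⟨a, b, e, he, rfl, rfl⟩ := exists_finRotate_equiv_split hij
  have hlen : a + 1 + (b + 1) = n := Fin.equiv_iff_eq.mp ⟨e⟩
  have hc' := hc.comp_equiv he
  rw [← walkMean_comp_equiv c e, walkMean_eq_add]
  exact convex_convexHull ℝ _ (ih _ (by omega) a.succ_pos (hc'.comp_castAdd hsrc))
    (ih _ (by omega) b.succ_pos (hc'.comp_natAdd hsrc)) (by positivity) (by positivity)
    (by field_simp; ring)

lemma simpleCycleMeans_finite [Finite V] [Finite E] :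
    (simpleCycleMeans src tgt f).Finite := by
  refine (Set.finite_range fun p : Σ n : Fin (Nat.card V + 1), Fin n → E =>
    walkMean f p.2).subset ?_
  rintro _ ⟨n, c, -, -, hinj, rfl⟩
  have : n ≤ Nat.card V := by simpa using Nat.card_le_card_of_injective _ hinj
  exact ⟨⟨⟨n, by omega⟩, c⟩, rfl⟩

end ClosedWalk

lemma simpleCycleValues_eq_simpleCycleMeans {V E H : Type*} [Fintype V] [Fintype E]
    [AddCommGroup H] (src tgt : E → V) (t : E → H) :
    simpleCycleValues src tgt t = simpleCycleMeans src tgt (fun e => (1 : ℝ) ⊗ₜ[ℤ] t e) := by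
  ext x
  constructor
  · rintro ⟨k, c, hc, hinj, rfl⟩
    exact ⟨k + 1, c, k.succ_pos, (isClosedWalk_succ_iff c).2 hc, hinj, walkMean_succ c⟩
  · rintro ⟨n, c, hn, hc, hinj, rfl⟩
    obtain ⟨k, rfl⟩ := Nat.exists_eq_add_one_of_ne_zero hn.ne'
    exact ⟨k, c, (isClosedWalk_succ_iff c).1 hc, hinj, walkMean_succ c⟩

theorem stmt15_general {V E H : Type*} [Fintype V] [Fintype E] [AddCommGroup H]
    (src tgt : E → V) (t : E → H) :
    cycleValues src tgt t ⊆ convexHull ℝ (simpleCycleValues src tgt t) ∧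
    (simpleCycleValues src tgt t).Finite := by
  rw [simpleCycleValues_eq_simpleCycleMeans]
  refine ⟨?_, simpleCycleMeans_finite⟩
  rintro _ ⟨k, c, hc, rfl⟩
  rw [← walkMean_succ]
  exact walkMean_mem_convexHull k.succ_pos ((isClosedWalk_succ_iff c).2 hc)

/-- The normalized translation of any cycle lies in the convex hull of the normalized
translations of the simple cycles; since there are finitely many simple cycles, the latter set
is finite (so this hull is a polytope). -/
theorem stmt15 {V E H : Type*} [Fintype V] [Fintype E] [AddCommGroup H]
    (hH : AddGroup.FG H) (src tgt : E → V) (t : E → H) :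
    cycleValues src tgt t ⊆ convexHull ℝ (simpleCycleValues src tgt t) ∧
    (simpleCycleValues src tgt t).Finite :=
  stmt15_general src tgt t
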